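/- Order the transpositions of the symmetric group S_n by: (a,b) < (c,d) (for a < b and c < d) iff a < c, or a = c and b < d. Label each cover relation u ⋖ v of the Bruhat order on S_n by the transposition v ∘ u⁻¹. Then for all u ≤ v in Bruhat order: (1) there is exactly one saturated chain from u to v whose label sequence is weakly ascending; and (2) the label sequence of this chain is lexicographically strictly smaller than the label sequence of every other saturated chain from u to v. -/

import Mathlib

/-- The number of inversions of a permutation. -/
def numInv {n : ℕ} (π : Equiv.Perm (Fin n)) : ℕ :=
  (Finset.univ.filter (fun p : Fin n × Fin n => p.1 < p.2 ∧ π p.2 < π p.1)).card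

/-- One step of the Bruhat order: left multiplication by a transposition raising `inv` by one. -/
def BruhatStep {n : ℕ} (u v : Equiv.Perm (Fin n)) : Prop :=
  (∃ a b : Fin n, a ≠ b ∧ v = Equiv.swap a b * u) ∧ numInv v = numInv u + 1

/-- The Bruhat order on `S_n`. -/
def BruhatLE {n : ℕ} : Equiv.Perm (Fin n) → Equiv.Perm (Fin n) → Prop :=
  Relation.ReflTransGen BruhatStep

/-- The covering relation of the Bruhat order. -/
def BruhatCov {n : ℕ} (u v : Equiv.Perm (Fin n)) : Prop :=
  BruhatLE u v ∧ u ≠ v ∧ ∀ z, BruhatLE u z → BruhatLE z v → z = u ∨ z = v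

/-- The order on transpositions: `(a,b) < (c,d)` (for `a < b`, `c < d`) iff `a < c`, or
`a = c` and `b < d`. -/
def transLT {n : ℕ} (t t' : Equiv.Perm (Fin n)) : Prop :=
  ∃ a b c d : Fin n, a < b ∧ c < d ∧ t = Equiv.swap a b ∧ t' = Equiv.swap c d ∧
    (a < c ∨ (a = c ∧ b < d))

def transLE {n : ℕ} (t t' : Equiv.Perm (Fin n)) : Prop := t = t' ∨ transLT t t'

/-- `c` is a saturated chain from `u` to `v` in the Bruhat order. -/
def BSatChain {n : ℕ} (c : List (Equiv.Perm (Fin n))) (u v : Equiv.Perm (Fin n)) : Prop :=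
  c.Chain' BruhatCov ∧ c.head? = some u ∧ c.getLast? = some v

/-- The label sequence of a chain: each cover `u ⋖ v` is labeled by the transposition
`v ∘ u⁻¹`. -/
def blabels {n : ℕ} (c : List (Equiv.Perm (Fin n))) : List (Equiv.Perm (Fin n)) :=
  c.zipWith (fun u v => v * u⁻¹) c.tail

/-!
Write `r_u(i, k) = #{j < i | k ≤ u j}`. If `a < b` and `a` stands left of `b` in `u`, then
`r_{(a b) u} = r_u + 1_R` for the rectangle `R = (u⁻¹ a, u⁻¹ b] × (a, b]`; the step is a cover
iff no value of `(a, b)` stands between the two positions, and `u ≤ v` iff `r_u ≤ r_v`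
pointwise. Consequently, whenever `r_u + 1_R ≤ r_v` for a rectangle `R` with lower-left corner
`(u⁻¹ c, c)` containing a point of the graph of `u`, the leftmost such point `(j, u j)` gives an
atom `u ⋖ (c (u j)) u ≤ v` of `[u, v]`. Two exchange properties follow by choosing rectangles:
if `u ⋖ (a b) u ⋖ (c d) (a b) u ≤ v` with `(c, d) < (a, b)`, then `[u, v]` has an atom `(c f)`
below `(a b)`; and if `(a f)` and `(a b)` with `f < b` are atoms of `[u, v]`, then
`[(a b) u, v]` has an atom `(a f')` with `f' < b`.

The first property makes the chain that always takes the lexicographically least atom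
increasing. Conversely, the first label `(a b)` of an increasing chain is below every atom
`(e f)` of `[u, v]`: such a chain never moves a value smaller than `a`, which rules out `e < a`,
and `e = a`, `f < b` contradicts the second property by induction along the chain. Uniqueness and
lexicographic minimality follow by induction.
-/

@[simp]
theorem Equiv.Perm.apply_inv_self {α : Type*} (f : Equiv.Perm α) (x : α) : f (f⁻¹ x) = x :=
  f.apply_symm_apply x

@[simp]
theorem Equiv.Perm.inv_apply_self {α : Type*} (f : Equiv.Perm α) (x : α) : f⁻¹ (f x) = x :=
  f.symm_apply_apply x

open Equiv Finset

theorem sum_add_eq_of_eq_off_pair {α M : Type*} [Fintype α] [DecidableEq α] [AddCommMonoid M]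
    {f g : α → M} {p q : α} (hpq : p ≠ q) (h : ∀ j, j ≠ p → j ≠ q → f j = g j) :
    ∑ j, f j + (g p + g q) = ∑ j, g j + (f p + f q) := by
  have hq : q ∈ univ.erase p := mem_erase.2 ⟨hpq.symm, mem_univ q⟩
  rw [← add_sum_erase _ f (mem_univ p), ← add_sum_erase _ f hq,
    ← add_sum_erase _ g (mem_univ p), ← add_sum_erase _ g hq,
    sum_congr rfl fun j hj => h j (ne_of_mem_erase (mem_of_mem_erase hj)) (ne_of_mem_erase hj)]
  abel

section RankFunction

variable {n : ℕ}

def rankFn (u : Perm (Fin n)) (i k : ℕ) : ℕ :=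
  ∑ j : Fin n, if j.1 < i ∧ k ≤ (u j).1 then 1 else 0

def rectInd (p q a b : Fin n) (i k : ℕ) : ℕ :=
  if p.1 < i ∧ i ≤ q.1 ∧ a.1 < k ∧ k ≤ b.1 then 1 else 0

theorem swap_mul_apply_inv_left (u : Perm (Fin n)) (a b : Fin n) : (swap a b * u) (u⁻¹ a) = b := by
  simp

theorem swap_mul_apply_inv_right (u : Perm (Fin n)) (a b : Fin n) :
    (swap a b * u) (u⁻¹ b) = a := by
  simp

theorem swap_mul_apply_of_ne {u : Perm (Fin n)} {a b j : Fin n} (ha : j ≠ u⁻¹ a)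
    (hb : j ≠ u⁻¹ b) : (swap a b * u) j = u j := by
  rw [Perm.mul_apply, swap_apply_of_ne_of_ne] <;> rintro rfl <;> simp_all

theorem inv_swap_mul_apply (u : Perm (Fin n)) (a b x : Fin n) :
    (swap a b * u)⁻¹ x = u⁻¹ (swap a b x) := by
  simp [Perm.mul_apply]

theorem rankFn_swap_mul {u : Perm (Fin n)} {a b : Fin n} (hab : a < b) (hpq : u⁻¹ a < u⁻¹ b)
    (i k : ℕ) : rankFn (swap a b * u) i k = rankFn u i k + rectInd (u⁻¹ a) (u⁻¹ b) a b i k := by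
  have key := sum_add_eq_of_eq_off_pair (f := fun j : Fin n =>
      if j.1 < i ∧ k ≤ ((swap a b * u) j).1 then 1 else 0)
    (g := fun j : Fin n => if j.1 < i ∧ k ≤ (u j).1 then 1 else 0) hpq.ne
    fun j hp hq => by simp only [swap_mul_apply_of_ne hp hq]
  simp only [swap_mul_apply_inv_left, swap_mul_apply_inv_right, Perm.apply_inv_self] at key
  unfold rankFn rectInd
  split_ifs at key ⊢ <;> omega

theorem numInv_eq_sum_rankFn (u : Perm (Fin n)) :
    numInv u = ∑ i : Fin n, rankFn u i ((u i).1 + 1) := by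
  rw [numInv, card_filter, ← univ_product_univ, sum_product, sum_comm]
  refine sum_congr rfl fun i _ => sum_congr rfl fun j _ => if_congr ?_ rfl rfl
  simp only [Fin.lt_def]
  omega

def midCount (u : Perm (Fin n)) (a b : Fin n) : ℕ :=
  ∑ j : Fin n, if u⁻¹ a < j ∧ j < u⁻¹ b ∧ a < u j ∧ u j < b then 1 else 0

theorem rankFn_add_midCount {u : Perm (Fin n)} {a b : Fin n} (hab : a < b)
    (hpq : u⁻¹ a < u⁻¹ b) :
    rankFn u (u⁻¹ a) (a + 1) + rankFn u (u⁻¹ b) (b + 1) + midCount u a b =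
      rankFn u (u⁻¹ b) (a + 1) + rankFn u (u⁻¹ a) (b + 1) := by
  simp only [rankFn, midCount, ← sum_add_distrib]
  refine sum_congr rfl fun j _ => ?_
  rcases eq_or_ne j (u⁻¹ a) with rfl | hja
  · simp only [Perm.apply_inv_self]; split_ifs <;> omega
  rcases eq_or_ne j (u⁻¹ b) with rfl | hjb
  · simp only [Perm.apply_inv_self]; split_ifs <;> omega
  have hua : u j ≠ a := fun h => hja (by simp [← h])
  have hub : u j ≠ b := fun h => hjb (by simp [← h])
  split_ifs <;> omega

theorem numInv_swap_mul {u : Perm (Fin n)} {a b : Fin n} (hab : a < b) (hpq : u⁻¹ a < u⁻¹ b) :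
    numInv (swap a b * u) = numInv u + 1 + 2 * midCount u a b := by
  have key := sum_add_eq_of_eq_off_pair
    (f := fun i : Fin n => rankFn (swap a b * u) i (((swap a b * u) i).1 + 1))
    (g := fun i : Fin n => rankFn u i ((u i).1 + 1) +
      if u⁻¹ a < i ∧ i < u⁻¹ b ∧ a < u i ∧ u i < b then 1 else 0) hpq.ne
    fun j hja hjb => by
      have hua : u j ≠ a := fun h => hja (by simp [← h])
      have hub : u j ≠ b := fun h => hjb (by simp [← h])
      simp only [swap_mul_apply_of_ne hja hjb, rankFn_swap_mul hab hpq, rectInd]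
      split_ifs <;> omega
  have hp : rankFn (swap a b * u) (u⁻¹ a) (((swap a b * u) (u⁻¹ a)).1 + 1) =
      rankFn u (u⁻¹ a) (b + 1) := by
    rw [swap_mul_apply_inv_left, rankFn_swap_mul hab hpq, rectInd, if_neg (by omega), add_zero]
  have hq : rankFn (swap a b * u) (u⁻¹ b) (((swap a b * u) (u⁻¹ b)).1 + 1) =
      rankFn u (u⁻¹ b) (a + 1) + 1 := by
    rw [swap_mul_apply_inv_right, rankFn_swap_mul hab hpq, rectInd, if_pos (by omega)]
  simp only [sum_add_distrib, hp, hq, Perm.apply_inv_self, lt_irrefl, false_and, and_false,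
    if_false, add_zero] at key
  have hmid := rankFn_add_midCount hab hpq
  rw [midCount] at hmid ⊢
  rw [numInv_eq_sum_rankFn, numInv_eq_sum_rankFn]
  omega

theorem midCount_eq_zero_iff {u : Perm (Fin n)} {a b : Fin n} :
    midCount u a b = 0 ↔ ∀ j, u⁻¹ a < j → j < u⁻¹ b → u j ∉ Set.Ioo a b := by
  simp only [midCount, sum_eq_zero_iff, mem_univ, true_implies, ite_eq_right_iff,
    one_ne_zero, imp_false, Set.mem_Ioo, not_and]

theorem rankFn_eq_add_sum (u : Perm (Fin n)) {i₀ i : ℕ} (h : i₀ ≤ i) (k : ℕ) :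
    rankFn u i k =
      rankFn u i₀ k + ∑ j : Fin n, if i₀ ≤ j.1 ∧ j.1 < i ∧ k ≤ (u j).1 then 1 else 0 := by
  rw [rankFn, rankFn, ← sum_add_distrib]
  refine sum_congr rfl fun j _ => ?_
  split_ifs <;> omega

theorem rankFn_succ (u : Perm (Fin n)) (i : Fin n) (k : ℕ) :
    rankFn u (i + 1) k = rankFn u i k + if k ≤ (u i).1 then 1 else 0 := by
  rw [rankFn_eq_add_sum u (Nat.le_succ i), Fintype.sum_eq_single i fun j hj =>
    if_neg (by have := Fin.val_ne_of_ne hj; omega)]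
  simp

theorem rankFn_congr_of_eqOn_lt {u v : Perm (Fin n)} {m : ℕ} (h : ∀ j : Fin n, j.1 < m → u j = v j)
    (k : ℕ) : rankFn u m k = rankFn v m k :=
  sum_congr rfl fun j _ => by by_cases hj : j.1 < m <;> simp [hj, h]

theorem rankFn_congr_of_inv_eqOn_lt {u v : Perm (Fin n)} {k : ℕ}
    (h : ∀ y : Fin n, y.1 < k → u⁻¹ y = v⁻¹ y) (i : ℕ) : rankFn u i k = rankFn v i k := by
  have hcompl : ∀ w : Perm (Fin n), rankFn w i k +
      ∑ y : Fin n, (if (w⁻¹ y).1 < i ∧ y.1 < k then 1 else 0) =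
      ∑ j : Fin n, if j.1 < i then 1 else 0 := fun w => by
    rw [← Fintype.sum_equiv w (fun j => if j.1 < i ∧ (w j).1 < k then 1 else 0) _
      fun j => by simp, rankFn, ← sum_add_distrib]
    exact sum_congr rfl fun j _ => by split_ifs <;> omega
  have hsum : (∑ y : Fin n, if (u⁻¹ y).1 < i ∧ y.1 < k then 1 else 0) =
      ∑ y : Fin n, if (v⁻¹ y).1 < i ∧ y.1 < k then 1 else 0 :=
    sum_congr rfl fun y _ => by by_cases hy : y.1 < k <;> simp [hy, h]
  have := hcompl u
  have := hcompl v
  omega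

end RankFunction

section BruhatSteps

variable {n : ℕ}

theorem bruhatStep_swap_mul_iff {u : Perm (Fin n)} {a b : Fin n} (hab : a < b) :
    BruhatStep u (swap a b * u) ↔
      u⁻¹ a < u⁻¹ b ∧ ∀ j, u⁻¹ a < j → j < u⁻¹ b → u j ∉ Set.Ioo a b := by
  rw [← midCount_eq_zero_iff]
  constructor
  · rintro ⟨-, hinv⟩
    rcases lt_or_gt_of_ne (u⁻¹.injective.ne hab.ne) with hpq | hqp
    · have := numInv_swap_mul hab hpq
      exact ⟨hpq, by omega⟩
    · -- In `w = (a b) u` the value `a` stands left of `b`, and `u = (a b) w` has more inversions.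
      have hw : (swap a b * u)⁻¹ a < (swap a b * u)⁻¹ b := by
        simpa [inv_swap_mul_apply] using hqp
      have := numInv_swap_mul hab hw
      rw [← mul_assoc, swap_mul_self, one_mul] at this
      omega
  · rintro ⟨hpq, hmid⟩
    exact ⟨⟨a, b, hab.ne, rfl⟩, by rw [numInv_swap_mul hab hpq, hmid]⟩

theorem BruhatStep.exists_swap_mul {u z : Perm (Fin n)} (h : BruhatStep u z) :
    ∃ a b, a < b ∧ z = swap a b * u := by
  obtain ⟨⟨a, b, hab, rfl⟩, -⟩ := h
  rcases lt_or_gt_of_ne hab with h | h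
  · exact ⟨a, b, h, rfl⟩
  · exact ⟨b, a, h, by rw [swap_comm]⟩

theorem BruhatStep.rankFn_le {u z : Perm (Fin n)} (h : BruhatStep u z) (i k : ℕ) :
    rankFn u i k ≤ rankFn z i k := by
  obtain ⟨a, b, hab, rfl⟩ := h.exists_swap_mul
  rw [rankFn_swap_mul hab ((bruhatStep_swap_mul_iff hab).1 h).1]
  omega

theorem BruhatLE.rankFn_le {u v : Perm (Fin n)} (h : BruhatLE u v) (i k : ℕ) :
    rankFn u i k ≤ rankFn v i k := by
  induction h with
  | refl => rfl
  | tail _ hstep ih => exact ih.trans (hstep.rankFn_le i k)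

theorem BruhatLE.numInv_le {u v : Perm (Fin n)} (h : BruhatLE u v) : numInv u ≤ numInv v := by
  induction h with
  | refl => rfl
  | tail _ hstep ih => exact ih.trans (hstep.2 ▸ Nat.le_succ _)

theorem BruhatLE.eq_of_numInv_le {u v : Perm (Fin n)} (h : BruhatLE u v)
    (h' : numInv v ≤ numInv u) : u = v := by
  rcases Relation.ReflTransGen.cases_head h with rfl | ⟨z, hz, hzv⟩
  · rfl
  · have := BruhatLE.numInv_le hzv
    have := hz.2
    omega

theorem bruhatCov_iff_bruhatStep {u v : Perm (Fin n)} : BruhatCov u v ↔ BruhatStep u v := by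
  constructor
  · rintro ⟨hle, hne, hbet⟩
    rcases Relation.ReflTransGen.cases_head hle with rfl | ⟨z, hz, hzv⟩
    · exact absurd rfl hne
    · rcases hbet z (.single hz) hzv with rfl | rfl
      · have := hz.2
        omega
      · exact hz
  · intro h
    refine ⟨.single h, fun huv => by have := h.2; rw [huv] at this; omega, fun z huz hzv => ?_⟩
    have := huz.numInv_le
    have := hzv.numInv_le
    have := h.2
    by_cases hz : numInv z ≤ numInv u
    · exact .inl (huz.eq_of_numInv_le hz).symm
    · exact .inr (hzv.eq_of_numInv_le (by omega))

end BruhatSteps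

section TableauCriterion

variable {n : ℕ}

theorem exists_bruhatStep_of_rect_le {u v : Perm (Fin n)} {c s K j : Fin n}
    (hdom : ∀ i k, rankFn u i k + rectInd (u⁻¹ c) s c K i k ≤ rankFn v i k)
    (hcj : u⁻¹ c < j) (hjs : j ≤ s) (hc : c < u j) (hK : u j ≤ K) :
    ∃ f, c < f ∧ f ≤ K ∧ BruhatStep u (swap c f * u) ∧
      ∀ i k, rankFn (swap c f * u) i k ≤ rankFn v i k := by
  obtain ⟨j₀, ⟨hcj₀, hj₀s, hcu, huK⟩, hmin⟩ := wellFounded_lt.has_min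
    {j | u⁻¹ c < j ∧ j ≤ s ∧ c < u j ∧ u j ≤ K} ⟨j, hcj, hjs, hc, hK⟩
  have hpos : u⁻¹ c < u⁻¹ (u j₀) := by simpa using hcj₀
  refine ⟨u j₀, hcu, huK, (bruhatStep_swap_mul_iff hcu).2 ⟨hpos, fun j hcj hjj₀ hj => ?_⟩,
    fun i k => ?_⟩
  · rw [Perm.inv_apply_self] at hjj₀
    exact hmin j ⟨hcj, hjj₀.le.trans hj₀s, hj.1, hj.2.le.trans huK⟩ hjj₀
  · have := hdom i k
    rw [rankFn_swap_mul hcu hpos, Perm.inv_apply_self]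
    unfold rectInd at *
    split_ifs at * <;> omega

theorem rect_le_of_first_diff {u v : Perm (Fin n)} {i₀ q : Fin n}
    (hdom : ∀ i k, rankFn u i k ≤ rankFn v i k) (hpre : ∀ k, rankFn u i₀ k = rankFn v i₀ k)
    (hlt : u i₀ < v i₀) (hmin : ∀ j, i₀ < j → j < q → u j ∉ Set.Ioc (u i₀) (v i₀)) (i k : ℕ) :
    rankFn u i k + rectInd i₀ q (u i₀) (v i₀) i k ≤ rankFn v i k := by
  rw [rectInd]
  split_ifs with hr
  swap
  · simpa using hdom i k
  obtain ⟨hi₀i, hiq, hk, hkv⟩ := hr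
  set K := (v i₀).1 + 1
  -- On `[i₀, i)` the thresholds `k` and `K` count the same entries of `u` (no value of `u` in
  -- `(u i₀, v i₀]` before `q`), while position `i₀` counts for `v` at `k` but not at `K`.
  have hu : (∑ j : Fin n, if i₀.1 ≤ j.1 ∧ j.1 < i ∧ k ≤ (u j).1 then 1 else 0) =
      ∑ j : Fin n, if i₀.1 ≤ j.1 ∧ j.1 < i ∧ K ≤ (u j).1 then 1 else 0 := by
    refine sum_congr rfl fun j _ => ?_
    rcases eq_or_ne j i₀ with rfl | hji₀
    · rw [if_neg (by omega), if_neg (by omega)]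
    by_cases hj : i₀.1 ≤ j.1 ∧ j.1 < i
    · have := hmin j (by omega) (by omega)
      simp only [Set.mem_Ioc, not_and, not_le] at this
      split_ifs <;> omega
    · rw [if_neg (by omega), if_neg (by omega)]
  have hv : (∑ j : Fin n, if i₀.1 ≤ j.1 ∧ j.1 < i ∧ K ≤ (v j).1 then 1 else 0) <
      ∑ j : Fin n, if i₀.1 ≤ j.1 ∧ j.1 < i ∧ k ≤ (v j).1 then 1 else 0 := by
    refine sum_lt_sum (fun j _ => ?_) ⟨i₀, mem_univ _, ?_⟩
    · split_ifs <;> omega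
    · rw [if_neg (by omega), if_pos (by omega)]
      exact zero_lt_one
  have := hdom i K
  rw [rankFn_eq_add_sum u hi₀i.le, rankFn_eq_add_sum v hi₀i.le] at this ⊢
  rw [hpre K] at this
  rw [hpre k]
  omega

theorem exists_bruhatStep_of_rankFn_le {u v : Perm (Fin n)}
    (hdom : ∀ i k, rankFn u i k ≤ rankFn v i k) (hne : u ≠ v) :
    ∃ z, BruhatStep u z ∧ ∀ i k, rankFn z i k ≤ rankFn v i k := by
  have hdiff : ∃ i, u i ≠ v i := by
    by_contra! h
    exact hne (Equiv.ext h)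
  obtain ⟨i₀, hi₀, hfirst⟩ := wellFounded_lt.has_min {i | u i ≠ v i} hdiff
  have hprefix : ∀ j, j < i₀ → u j = v j := fun j hj => by
    by_contra h
    exact hfirst j h hj
  have hpre : ∀ k, rankFn u i₀ k = rankFn v i₀ k :=
    rankFn_congr_of_eqOn_lt fun j hj => hprefix j hj
  have hlt : u i₀ < v i₀ := by
    have := hdom (i₀ + 1) (u i₀)
    rw [rankFn_succ, rankFn_succ, hpre, if_pos le_rfl] at this
    exact lt_of_le_of_ne (by split_ifs at this <;> omega) hi₀
  have hpos : i₀ < u⁻¹ (v i₀) := by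
    have hne' : u⁻¹ (v i₀) ≠ i₀ := fun h => hi₀ (Perm.inv_eq_iff_eq.1 h).symm
    refine lt_of_le_of_ne (not_lt.1 fun h => hne' (v.injective ?_)) hne'.symm
    rw [← hprefix _ h, Perm.apply_inv_self]
  obtain ⟨q, ⟨hi₀q, hq, hqv⟩, hqmin⟩ := wellFounded_lt.has_min
    {j | i₀ < j ∧ u i₀ < u j ∧ u j ≤ v i₀} ⟨_, hpos, by simpa using hlt, by simp⟩
  have hrect := rect_le_of_first_diff hdom hpre hlt fun j hi₀j hjq hj => hqmin j ⟨hi₀j, hj⟩ hjq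
  obtain ⟨f, -, -, hstep, hle⟩ := exists_bruhatStep_of_rect_le (s := q) (by simpa using hrect)
    (by simpa using hi₀q) le_rfl hq hqv
  exact ⟨_, hstep, hle⟩

def rankSum (u : Perm (Fin n)) : ℕ :=
  ∑ i ∈ range (n + 1), ∑ k ∈ range (n + 1), rankFn u i k

theorem rankSum_le_rankSum {u v : Perm (Fin n)} (h : ∀ i k, rankFn u i k ≤ rankFn v i k) :
    rankSum u ≤ rankSum v :=
  sum_le_sum fun i _ => sum_le_sum fun k _ => h i k

theorem BruhatStep.rankSum_lt {u z : Perm (Fin n)} (h : BruhatStep u z) :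
    rankSum u < rankSum z := by
  obtain ⟨a, b, hab, rfl⟩ := h.exists_swap_mul
  have hpq := ((bruhatStep_swap_mul_iff hab).1 h).1
  refine sum_lt_sum (fun i _ => sum_le_sum fun k _ => h.rankFn_le i k)
    ⟨(u⁻¹ a).1 + 1, by simp only [mem_range]; omega,
      sum_lt_sum (fun k _ => h.rankFn_le _ k) ⟨a.1 + 1, by simp only [mem_range]; omega, ?_⟩⟩
  rw [rankFn_swap_mul hab hpq, rectInd, if_pos (by omega)]
  omega

theorem bruhatLE_iff_rankFn_le {u v : Perm (Fin n)} :
    BruhatLE u v ↔ ∀ i k, rankFn u i k ≤ rankFn v i k := by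
  refine ⟨fun h => h.rankFn_le, fun h => ?_⟩
  induction hm : rankSum v - rankSum u using Nat.strong_induction_on generalizing u with
  | _ m ih =>
  by_cases huv : u = v
  · exact huv ▸ .refl
  obtain ⟨z, hz, hzv⟩ := exists_bruhatStep_of_rankFn_le h huv
  have := hz.rankSum_lt
  have := rankSum_le_rankSum hzv
  exact .head hz (ih _ (by omega) hzv rfl)

end TableauCriterion

section Transpositions

variable {n : ℕ}

theorem swap_eq_swap_iff_of_lt {a b c d : Fin n} (hab : a < b) (hcd : c < d) :
    swap a b = swap c d ↔ a = c ∧ b = d := by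
  refine ⟨fun h => ?_, fun ⟨hac, hbd⟩ => hac ▸ hbd ▸ rfl⟩
  have ha : swap c d a = b := by rw [← h, swap_apply_left]
  have hb : swap c d b = a := by rw [← h, swap_apply_right]
  rw [swap_apply_def] at ha hb
  split_ifs at ha hb <;> omega

theorem transLT_swap_swap_iff {a b c d : Fin n} (hab : a < b) (hcd : c < d) :
    transLT (swap a b) (swap c d) ↔ toLex (a, b) < toLex (c, d) := by
  refine ⟨fun ⟨a', b', c', d', hab', hcd', h₁, h₂, h⟩ => ?_, fun h =>
    ⟨a, b, c, d, hab, hcd, rfl, rfl, Prod.Lex.toLex_lt_toLex.1 h⟩⟩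
  obtain ⟨rfl, rfl⟩ := (swap_eq_swap_iff_of_lt hab hab').1 h₁
  obtain ⟨rfl, rfl⟩ := (swap_eq_swap_iff_of_lt hcd hcd').1 h₂
  exact Prod.Lex.toLex_lt_toLex.2 h

theorem transLE_swap_swap_iff {a b c d : Fin n} (hab : a < b) (hcd : c < d) :
    transLE (swap a b) (swap c d) ↔ toLex (a, b) ≤ toLex (c, d) := by
  rw [transLE, transLT_swap_swap_iff hab hcd, swap_eq_swap_iff_of_lt hab hcd, le_iff_eq_or_lt,
    toLex_inj, Prod.mk.injEq]

theorem exists_swap_of_transLE {a b : Fin n} {t : Perm (Fin n)} (hab : a < b)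
    (h : transLE (swap a b) t) : ∃ c d, c < d ∧ t = swap c d ∧ toLex (a, b) ≤ toLex (c, d) := by
  rcases h with rfl | hlt
  · exact ⟨a, b, hab, rfl, le_rfl⟩
  · obtain ⟨-, -, c, d, -, hcd, -, rfl, -⟩ := id hlt
    exact ⟨c, d, hcd, rfl, (transLE_swap_swap_iff hab hcd).1 (.inr hlt)⟩

theorem transLE_trans {t₁ t₂ t₃ : Perm (Fin n)} (h₁ : transLE t₁ t₂) (h₂ : transLE t₂ t₃) :
    transLE t₁ t₃ := by
  rcases h₁ with rfl | ⟨a, b, c, d, hab, hcd, rfl, rfl, h₁⟩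
  · exact h₂
  obtain ⟨e, f, hef, rfl, hle⟩ := exists_swap_of_transLE hcd h₂
  exact (transLE_swap_swap_iff hab hef).2 ((Prod.Lex.toLex_lt_toLex.2 h₁).trans_le hle).le

instance : Trans (transLE (n := n)) transLE transLE := ⟨transLE_trans⟩

theorem transLT_asymm {t t' : Perm (Fin n)} (h : transLT t t') : ¬ transLT t' t := by
  obtain ⟨a, b, c, d, hab, hcd, rfl, rfl, h⟩ := h
  rw [transLT_swap_swap_iff hcd hab]
  exact (Prod.Lex.toLex_lt_toLex.2 h).asymm

instance : Std.Asymm (transLT (n := n)) := ⟨fun _ _ => transLT_asymm⟩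

end Transpositions

section Chains

variable {n : ℕ}

theorem bsatChain_singleton_iff {x u v : Perm (Fin n)} : BSatChain [x] u v ↔ x = u ∧ u = v := by
  simp only [BSatChain, List.Chain', List.isChain_singleton, List.head?_cons,
    List.getLast?_singleton, Option.some.injEq, true_and]
  exact ⟨fun ⟨h₁, h₂⟩ => ⟨h₁, h₁.symm.trans h₂⟩, fun ⟨h₁, h₂⟩ => ⟨h₁, h₁.trans h₂⟩⟩

theorem bsatChain_cons_cons_iff {x y u v : Perm (Fin n)} {l : List (Perm (Fin n))} :
    BSatChain (x :: y :: l) u v ↔ x = u ∧ BruhatStep u y ∧ BSatChain (y :: l) y v := by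
  simp only [BSatChain, List.Chain', List.isChain_cons_cons, bruhatCov_iff_bruhatStep,
    List.head?_cons, List.getLast?_cons_cons, Option.some.injEq, true_and]
  constructor
  · rintro ⟨⟨hstep, hl⟩, rfl, hlast⟩
    exact ⟨rfl, hstep, hl, hlast⟩
  · rintro ⟨rfl, hstep, hl, hlast⟩
    exact ⟨⟨hstep, hl⟩, rfl, hlast⟩

theorem BSatChain.bruhatLE {c : List (Perm (Fin n))} {u v : Perm (Fin n)} (h : BSatChain c u v) :
    BruhatLE u v := by
  induction c generalizing u with
  | nil => exact absurd h.2.1 (by simp)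
  | cons x t ih =>
    cases t with
    | nil => exact (bsatChain_singleton_iff.1 h).2 ▸ .refl
    | cons y l =>
      obtain ⟨-, hstep, htail⟩ := bsatChain_cons_cons_iff.1 h
      exact .head hstep (ih htail)

theorem BSatChain.eq_singleton {c : List (Perm (Fin n))} {u : Perm (Fin n)}
    (h : BSatChain c u u) : c = [u] := by
  match c, h with
  | [], h => exact absurd h.2.1 (by simp)
  | [x], h => rw [(bsatChain_singleton_iff.1 h).1]
  | x :: y :: l, h =>
    obtain ⟨-, hstep, htail⟩ := bsatChain_cons_cons_iff.1 h
    have := htail.bruhatLE.numInv_le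
    have := hstep.2
    omega

theorem BSatChain.exists_eq_cons {c : List (Perm (Fin n))} {u v : Perm (Fin n)}
    (h : BSatChain c u v) : ∃ l, c = u :: l := by
  match c, h with
  | [], h => exact absurd h.2.1 (by simp)
  | x :: l, h => exact ⟨l, by rw [Option.some.inj h.2.1]⟩

theorem BSatChain.exists_eq_swap_mul_cons {c : List (Perm (Fin n))} {u v : Perm (Fin n)}
    (h : BSatChain c u v) (hne : u ≠ v) :
    ∃ a b l, a < b ∧ c = u :: swap a b * u :: l := by
  match c, h with
  | [], h => exact absurd h.2.1 (by simp)
  | [x], h => exact absurd (bsatChain_singleton_iff.1 h).2 hne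
  | x :: y :: l, h =>
    obtain ⟨rfl, hstep, -⟩ := bsatChain_cons_cons_iff.1 h
    obtain ⟨a, b, hab, rfl⟩ := hstep.exists_swap_mul
    exact ⟨a, b, l, hab, rfl⟩

theorem blabels_swap_mul_cons (u : Perm (Fin n)) (a b : Fin n) (l : List (Perm (Fin n))) :
    blabels (u :: swap a b * u :: l) = swap a b :: blabels (swap a b * u :: l) := by
  simp [blabels]

theorem inv_apply_eq_of_forall_mem_blabels {c : List (Perm (Fin n))} {u v : Perm (Fin n)}
    (h : BSatChain c u v) {x : Fin n} (hx : ∀ t ∈ blabels c, t x = x) : u⁻¹ x = v⁻¹ x := by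
  induction c generalizing u with
  | nil => exact absurd h.2.1 (by simp)
  | cons y t ih =>
    cases t with
    | nil => rw [(bsatChain_singleton_iff.1 h).2]
    | cons z l =>
      obtain ⟨rfl, -, htail⟩ := bsatChain_cons_cons_iff.1 h
      have hzx : (z * y⁻¹) x = x := hx _ List.mem_cons_self
      rw [← ih htail fun t ht => hx t (List.mem_cons_of_mem _ ht), Perm.eq_inv_iff_eq]
      simpa [Perm.mul_apply] using hzx

theorem inv_apply_eq_of_increasing {u v : Perm (Fin n)} {a b x : Fin n}
    {l : List (Perm (Fin n))} (hab : a < b) (hc : BSatChain (u :: swap a b * u :: l) u v)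
    (hinc : (blabels (u :: swap a b * u :: l)).IsChain transLE) (hx : x < a) :
    u⁻¹ x = v⁻¹ x := by
  refine inv_apply_eq_of_forall_mem_blabels hc fun t ht => ?_
  rw [blabels_swap_mul_cons] at ht hinc
  rcases List.mem_cons.1 ht with rfl | ht
  · exact swap_apply_of_ne_of_ne hx.ne (by omega)
  · obtain ⟨c, d, hcd, rfl, hle⟩ := exists_swap_of_transLE hab (hinc.rel_cons ht)
    have := Prod.Lex.toLex_le_toLex.1 hle
    dsimp only at this
    exact swap_apply_of_ne_of_ne (by omega) (by omega)

end Chains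

section Atoms

variable {n : ℕ}

def IsAtomLabel (u v : Perm (Fin n)) (a b : Fin n) : Prop :=
  a < b ∧ BruhatStep u (swap a b * u) ∧ BruhatLE (swap a b * u) v

theorem IsAtomLabel.ne {u v : Perm (Fin n)} {a b : Fin n} (h : IsAtomLabel u v a b) : u ≠ v := by
  rintro rfl
  have := h.2.2.numInv_le
  have := h.2.1.2
  omega

theorem isAtomLabel_of_bsatChain {u v : Perm (Fin n)} {a b : Fin n} {l : List (Perm (Fin n))}
    (hab : a < b) (h : BSatChain (u :: swap a b * u :: l) u v) : IsAtomLabel u v a b :=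
  have h' := bsatChain_cons_cons_iff.1 h
  ⟨hab, h'.2.1, h'.2.2.bruhatLE⟩

theorem exists_isAtomLabel_of_rect_le {u v : Perm (Fin n)} {c s K j : Fin n}
    (hdom : ∀ i k, rankFn u i k + rectInd (u⁻¹ c) s c K i k ≤ rankFn v i k)
    (hcj : u⁻¹ c < j) (hjs : j ≤ s) (hc : c < u j) (hK : u j ≤ K) :
    ∃ f ≤ K, IsAtomLabel u v c f := by
  obtain ⟨f, hcf, hfK, hstep, hle⟩ := exists_bruhatStep_of_rect_le hdom hcj hjs hc hK
  exact ⟨f, hfK, hcf, hstep, bruhatLE_iff_rankFn_le.2 hle⟩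

theorem IsAtomLabel.exists_inv_apply_ne {u v : Perm (Fin n)} {a b : Fin n}
    (h : IsAtomLabel u v a b) : ∃ x ≤ a, u⁻¹ x ≠ v⁻¹ x := by
  obtain ⟨hab, hstep, hle⟩ := h
  have hpq := ((bruhatStep_swap_mul_iff hab).1 hstep).1
  by_contra! hfix
  have := hle.rankFn_le ((u⁻¹ a).1 + 1) (a.1 + 1)
  rw [rankFn_swap_mul hab hpq, rectInd, if_pos (by omega),
    rankFn_congr_of_inv_eqOn_lt fun y hy => hfix y (by omega)] at this
  omega

theorem exists_isAtomLabel_of_isAtomLabel_of_lt {u v : Perm (Fin n)} {a b f : Fin n}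
    (hb : IsAtomLabel u v a b) (hf : IsAtomLabel u v a f) (hfb : f < b) :
    ∃ f' < b, IsAtomLabel (swap a b * u) v a f' := by
  obtain ⟨hab, hbstep, hble⟩ := hb
  obtain ⟨haf, hfstep, hfle⟩ := hf
  obtain ⟨hpq, hbmid⟩ := (bruhatStep_swap_mul_iff hab).1 hbstep
  have hps := ((bruhatStep_swap_mul_iff haf).1 hfstep).1
  have hfa : u⁻¹ f ≠ u⁻¹ a := u⁻¹.injective.ne haf.ne'
  have hfb' : u⁻¹ f ≠ u⁻¹ b := u⁻¹.injective.ne hfb.ne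
  have hwa : (swap a b * u)⁻¹ a = u⁻¹ b := by simp
  have hwf : (swap a b * u) (u⁻¹ f) = f := by
    rw [swap_mul_apply_of_ne hfa hfb', Perm.apply_inv_self]
  have hqs : u⁻¹ b < u⁻¹ f := by
    have := hbmid (u⁻¹ f) hps
    simp only [Perm.apply_inv_self, Set.mem_Ioo, not_and] at this
    exact lt_of_le_of_ne (not_lt.1 fun h => this h haf hfb) hfb'.symm
  -- `(u⁻¹ b, u⁻¹ f] × (a, f]` lies in the rectangle of `(a f)` and misses that of `(a b)`.
  have hdom : ∀ i k, rankFn (swap a b * u) i k +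
      rectInd ((swap a b * u)⁻¹ a) (u⁻¹ f) a f i k ≤ rankFn v i k := fun i k => by
    have h₁ := hble.rankFn_le i k
    have h₂ := hfle.rankFn_le i k
    rw [rankFn_swap_mul hab hpq] at h₁ ⊢
    rw [rankFn_swap_mul haf hps] at h₂
    rw [hwa]
    unfold rectInd at *
    split_ifs at * <;> omega
  obtain ⟨f', hf'f, hf'⟩ :=
    exists_isAtomLabel_of_rect_le hdom (by rwa [hwa]) le_rfl (by rwa [hwf]) hwf.le
  exact ⟨f', hf'f.trans_lt hfb, hf'⟩

end Atoms

section Descent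

variable {n : ℕ}

theorem rankFn_add_rectInd_add_rectInd_le {u v : Perm (Fin n)} {a b c d : Fin n} (hab : a < b)
    (hstep : BruhatStep u (swap a b * u)) (h : IsAtomLabel (swap a b * u) v c d) (i k : ℕ) :
    rankFn u i k + rectInd (u⁻¹ a) (u⁻¹ b) a b i k +
      rectInd ((swap a b * u)⁻¹ c) ((swap a b * u)⁻¹ d) c d i k ≤ rankFn v i k := by
  have := h.2.2.rankFn_le i k
  rwa [rankFn_swap_mul h.1 ((bruhatStep_swap_mul_iff h.1).1 h.2.1).1,
    rankFn_swap_mul hab ((bruhatStep_swap_mul_iff hab).1 hstep).1] at this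

theorem exists_isAtomLabel_of_descent_of_eq {u v : Perm (Fin n)} {a b d : Fin n} (hab : a < b)
    (hstep : BruhatStep u (swap a b * u)) (h : IsAtomLabel (swap a b * u) v a d) (hdb : d < b) :
    ∃ f < b, IsAtomLabel u v a f := by
  have hdom := rankFn_add_rectInd_add_rectInd_le hab hstep h
  have hpq := ((bruhatStep_swap_mul_iff hab).1 hstep).1
  have hrs := ((bruhatStep_swap_mul_iff h.1).1 h.2.1).1
  have hwa : (swap a b * u)⁻¹ a = u⁻¹ b := by simp
  have hwd : (swap a b * u)⁻¹ d = u⁻¹ d := by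
    rw [inv_swap_mul_apply, swap_apply_of_ne_of_ne h.1.ne' hdb.ne]
  rw [hwa, hwd] at hrs
  have hR : ∀ i k, rankFn u i k + rectInd (u⁻¹ a) (u⁻¹ d) a d i k ≤ rankFn v i k := fun i k => by
    have := hdom i k
    rw [hwa, hwd] at this
    unfold rectInd at *
    split_ifs at * <;> omega
  obtain ⟨f, hfd, hf⟩ :=
    exists_isAtomLabel_of_rect_le hR (hpq.trans hrs) le_rfl (by simpa using h.1) (by simp)
  exact ⟨f, hfd.trans_lt hdb, hf⟩

theorem exists_isAtomLabel_of_descent_of_lt {u v : Perm (Fin n)} {a b c d : Fin n} (hab : a < b)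
    (hstep : BruhatStep u (swap a b * u)) (h : IsAtomLabel (swap a b * u) v c d) (hca : c < a) :
    ∃ f, IsAtomLabel u v c f := by
  have hdom := rankFn_add_rectInd_add_rectInd_le hab hstep h
  have hpq := ((bruhatStep_swap_mul_iff hab).1 hstep).1
  have hrs := ((bruhatStep_swap_mul_iff h.1).1 h.2.1).1
  have hwc : (swap a b * u)⁻¹ c = u⁻¹ c := by
    rw [inv_swap_mul_apply, swap_apply_of_ne_of_ne hca.ne (hca.trans hab).ne]
  rw [hwc] at hdom hrs
  -- The rectangle is that of `(c d)`, except when `d = a` stands left of `c`: then those of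
  -- `(a b)` and `(c a)` together cover `(u⁻¹ c, u⁻¹ b] × (c, b]`.
  rcases eq_or_ne a d with rfl | had
  · have hwa : (swap a b * u)⁻¹ a = u⁻¹ b := by simp
    rw [hwa] at hdom hrs
    rcases lt_or_gt_of_ne (u⁻¹.injective.ne hca.ne) with hrp | hpr
    · obtain ⟨f, -, hf⟩ := exists_isAtomLabel_of_rect_le (v := v) (s := u⁻¹ b) (K := a)
        (fun i k => by have := hdom i k; omega) hrp hpq.le (by simpa using hca) (by simp)
      exact ⟨f, hf⟩
    · have hR : ∀ i k, rankFn u i k + rectInd (u⁻¹ c) (u⁻¹ b) c b i k ≤ rankFn v i k :=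
        fun i k => by
          have := hdom i k
          unfold rectInd at *
          split_ifs at * <;> omega
      obtain ⟨f, -, hf⟩ :=
        exists_isAtomLabel_of_rect_le hR hrs le_rfl (by simpa using hca.trans hab) (by simp)
      exact ⟨f, hf⟩
  · have hud : u ((swap a b * u)⁻¹ d) = swap a b d := by simp
    have hcd : c < swap a b d ∧ swap a b d ≤ d := by
      rcases eq_or_ne d b with rfl | hdb
      · rw [swap_apply_right]
        exact ⟨hca, hab.le⟩
      · rw [swap_apply_of_ne_of_ne had.symm hdb]
        exact ⟨h.1, le_rfl⟩
    obtain ⟨f, -, hf⟩ := exists_isAtomLabel_of_rect_le (v := v) (s := (swap a b * u)⁻¹ d) (K := d)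
      (fun i k => by have := hdom i k; omega) hrs le_rfl (hud ▸ hcd.1) (hud ▸ hcd.2)
    exact ⟨f, hf⟩

theorem exists_isAtomLabel_of_descent {u v : Perm (Fin n)} {a b c d : Fin n} (hab : a < b)
    (hstep : BruhatStep u (swap a b * u)) (h : IsAtomLabel (swap a b * u) v c d)
    (hlt : toLex (c, d) < toLex (a, b)) :
    ∃ f, IsAtomLabel u v c f ∧ toLex (c, f) < toLex (a, b) := by
  rw [Prod.Lex.toLex_lt_toLex] at hlt
  rcases hlt with hca | ⟨rfl, hdb⟩
  · obtain ⟨f, hf⟩ := exists_isAtomLabel_of_descent_of_lt hab hstep h hca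
    exact ⟨f, hf, Prod.Lex.toLex_lt_toLex.2 (.inl hca)⟩
  · obtain ⟨f, hfb, hf⟩ := exists_isAtomLabel_of_descent_of_eq hab hstep h hdb
    exact ⟨f, hf, Prod.Lex.toLex_lt_toLex.2 (.inr ⟨rfl, hfb⟩)⟩

end Descent

section Shelling

variable {n : ℕ}

theorem le_of_increasing_of_isAtomLabel {u v : Perm (Fin n)} {a b e f : Fin n}
    {l : List (Perm (Fin n))} (hab : a < b) (hc : BSatChain (u :: swap a b * u :: l) u v)
    (hinc : (blabels (u :: swap a b * u :: l)).IsChain transLE) (he : IsAtomLabel u v e f) :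
    a ≤ e := by
  by_contra! hea
  obtain ⟨x, hxe, hx⟩ := he.exists_inv_apply_ne
  exact hx (inv_apply_eq_of_increasing hab hc hinc (hxe.trans_lt hea))

theorem exists_isAtomLabel_of_increasing_of_lt {u v : Perm (Fin n)} {a b e f : Fin n}
    {l : List (Perm (Fin n))} (hab : a < b) (hc : BSatChain (u :: swap a b * u :: l) u v)
    (hinc : (blabels (u :: swap a b * u :: l)).IsChain transLE) (he : IsAtomLabel u v e f)
    (hlt : toLex (e, f) < toLex (a, b)) : ∃ f' < b, IsAtomLabel (swap a b * u) v a f' := by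
  rcases Prod.Lex.toLex_lt_toLex.1 hlt with hea | ⟨hea, hfb⟩
  · exact absurd (le_of_increasing_of_isAtomLabel hab hc hinc he) (not_le.2 hea)
  · dsimp only at hea hfb
    subst hea
    exact exists_isAtomLabel_of_isAtomLabel_of_lt (isAtomLabel_of_bsatChain hab hc) he hfb

theorem toLex_le_of_increasing {v : Perm (Fin n)} {l : List (Perm (Fin n))} :
    ∀ {u : Perm (Fin n)} {a b e f : Fin n}, a < b → BSatChain (u :: swap a b * u :: l) u v →
      (blabels (u :: swap a b * u :: l)).IsChain transLE → IsAtomLabel u v e f →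
      toLex (a, b) ≤ toLex (e, f) := by
  induction l with
  | nil =>
    intro u a b e f hab hc hinc he
    by_contra! hlt
    obtain ⟨f', -, hf'⟩ := exists_isAtomLabel_of_increasing_of_lt hab hc hinc he hlt
    exact hf'.ne (bsatChain_singleton_iff.1 (bsatChain_cons_cons_iff.1 hc).2.2).2
  | cons y l ih =>
    intro u a b e f hab hc hinc he
    by_contra! hlt
    obtain ⟨f', hf'b, hf'⟩ := exists_isAtomLabel_of_increasing_of_lt hab hc hinc he hlt
    obtain ⟨-, -, htail⟩ := bsatChain_cons_cons_iff.1 hc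
    obtain ⟨c, d, hcd, rfl⟩ := (bsatChain_cons_cons_iff.1 htail).2.1.exists_swap_mul
    rw [blabels_swap_mul_cons] at hinc
    have h₂ := ih hcd htail hinc.tail hf'
    rw [blabels_swap_mul_cons, List.isChain_cons_cons] at hinc
    have h₁ := (transLE_swap_swap_iff hab hcd).1 hinc.1
    have := Prod.Lex.toLex_le_toLex.1 (h₁.trans h₂)
    dsimp only at this
    omega

theorem lex_blabels_of_increasing {v : Perm (Fin n)} {c : List (Perm (Fin n))} :
    ∀ {u : Perm (Fin n)} {c' : List (Perm (Fin n))}, BSatChain c u v →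
      (blabels c).IsChain transLE → BSatChain c' u v → c' ≠ c →
      List.Lex transLT (blabels c) (blabels c') := by
  induction c with
  | nil => exact fun hc => absurd hc.2.1 (by simp)
  | cons x t ih =>
    intro u c' hc hinc hc' hne
    by_cases huv : u = v
    · subst huv
      exact absurd (hc'.eq_singleton.trans hc.eq_singleton.symm) hne
    obtain ⟨a, b, l, hab, hxt⟩ := hc.exists_eq_swap_mul_cons huv
    obtain ⟨rfl, rfl⟩ := List.cons.inj hxt
    obtain ⟨e, f, l', hef, rfl⟩ := hc'.exists_eq_swap_mul_cons huv
    have hle := toLex_le_of_increasing hab hc hinc (isAtomLabel_of_bsatChain hef hc')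
    rw [blabels_swap_mul_cons] at hinc
    rw [blabels_swap_mul_cons, blabels_swap_mul_cons]
    rcases hle.lt_or_eq with hlt | heq
    · exact .rel ((transLT_swap_swap_iff hab hef).2 hlt)
    · obtain ⟨rfl, rfl⟩ : a = e ∧ b = f := by simpa using heq
      exact .cons (ih (bsatChain_cons_cons_iff.1 hc).2.2 hinc.tail
        (bsatChain_cons_cons_iff.1 hc').2.2 fun h => hne (by rw [h]))

theorem exists_min_isAtomLabel {u v : Perm (Fin n)} (h : BruhatLE u v) (hne : u ≠ v) :
    ∃ a b, IsAtomLabel u v a b ∧ ∀ e f, IsAtomLabel u v e f → toLex (a, b) ≤ toLex (e, f) := by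
  classical
  obtain ⟨z, hz, hzv⟩ := (Relation.ReflTransGen.cases_head h).resolve_left hne
  obtain ⟨a, b, hab, rfl⟩ := hz.exists_swap_mul
  obtain ⟨⟨a₀, b₀⟩, hmem, hmin⟩ :=
    (univ.filter fun p : Fin n × Fin n => IsAtomLabel u v p.1 p.2).exists_min_image toLex
      ⟨(a, b), mem_filter.2 ⟨mem_univ _, hab, hz, hzv⟩⟩
  exact ⟨a₀, b₀, (mem_filter.1 hmem).2, fun e f he => hmin (e, f) (mem_filter.2 ⟨mem_univ _, he⟩)⟩

theorem exists_increasing_bsatChain {u v : Perm (Fin n)} (h : BruhatLE u v) :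
    ∃ c, BSatChain c u v ∧ (blabels c).IsChain transLE := by
  induction hm : numInv v - numInv u using Nat.strong_induction_on generalizing u with
  | _ m ih =>
  by_cases huv : u = v
  · exact ⟨[u], bsatChain_singleton_iff.2 ⟨rfl, huv⟩, by simp [blabels]⟩
  obtain ⟨a, b, ⟨hab, hstep, hle⟩, hmin⟩ := exists_min_isAtomLabel h huv
  obtain ⟨c₀, hc₀, hinc₀⟩ := ih _ (by have := hle.numInv_le; have := hstep.2; omega) hle rfl
  obtain ⟨l, rfl⟩ := hc₀.exists_eq_cons
  refine ⟨u :: swap a b * u :: l, bsatChain_cons_cons_iff.2 ⟨rfl, hstep, hc₀⟩, ?_⟩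
  rw [blabels_swap_mul_cons]
  cases l with
  | nil => exact List.isChain_singleton _
  | cons y l =>
    obtain ⟨c, d, hcd, rfl⟩ := (bsatChain_cons_cons_iff.1 hc₀).2.1.exists_swap_mul
    rw [blabels_swap_mul_cons] at hinc₀ ⊢
    refine List.isChain_cons_cons.2 ⟨(transLE_swap_swap_iff hab hcd).2 (not_lt.1 fun hlt => ?_),
      hinc₀⟩
    obtain ⟨f, hf, hflt⟩ :=
      exists_isAtomLabel_of_descent hab hstep (isAtomLabel_of_bsatChain hcd hc₀) hlt
    exact (hflt.trans_le (hmin c f hf)).false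

end Shelling

/-- Dyer's EL-labeling of Bruhat order: for `u ≤ v`, there is exactly one saturated chain from
`u` to `v` with weakly ascending labels, and its label sequence is lexicographically strictly
smaller than that of every other saturated chain from `u` to `v`. -/
theorem bruhat_EL_shelling (n : ℕ) (u v : Equiv.Perm (Fin n)) (h : BruhatLE u v) :
    (∃! c : List (Equiv.Perm (Fin n)), BSatChain c u v ∧ List.Chain' transLE (blabels c)) ∧
    (∀ c c' : List (Equiv.Perm (Fin n)), BSatChain c u v → List.Chain' transLE (blabels c) →
      BSatChain c' u v → c' ≠ c → List.Lex transLT (blabels c) (blabels c')) := by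
  obtain ⟨c, hc, hinc⟩ := exists_increasing_bsatChain h
  refine ⟨⟨c, ⟨hc, hinc⟩, fun c' ⟨hc', hinc'⟩ => ?_⟩, fun _ _ => lex_blabels_of_increasing⟩
  by_contra hne
  exact asymm (lex_blabels_of_increasing hc hinc hc' hne)
    (lex_blabels_of_increasing hc' hinc' hc (Ne.symm hne))
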